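/- (Fejér monotonicity of the modified subgradient extragradient iterates.) Under the same assumptions as the contraction inequality, and additionally assuming the stepsize condition $\alpha_k \|F(x^k) - F(y^k)\| \leq \mu \|x^k - y^k\|$ with $\mu \in (0,1)$, the next iterate satisfies $\|x^{k+1} - x^*\|^2 \leq \|x^k - x^*\|^2 - \frac{\gamma(2-\gamma)(1-\mu)^3}{1+\mu^2} \|x^k - y^k\|^2$; in particular $\|x^{k+1} - x^*\| \leq \|x^k - x^*\|$. -/

import Mathlib

/-!
The next iterate is the projection onto the half-space `T` of a step along `-F y`; since `T`
contains the solution `x*` (by the variational characterization of `y = P_C(x - α F x)`), the usual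
projection estimate combined with monotonicity of `F` gives the contraction inequality
`‖x⁺ - x*‖² ≤ ‖x - x*‖² - γ(2 - γ) ρ² ‖d‖²`. It remains to bound `ρ² ‖d‖² = ⟪x - y, d⟫² / ‖d‖²`
from below, which the stepsize condition does through `⟪x - y, d⟫ ≥ (1 - μ) ‖x - y‖²` and
`‖d‖² ≤ (1 + μ²) ‖x - y‖²`.
-/

open scoped RealInnerProductSpace

section

variable {H : Type*} [NormedAddCommGroup H] [InnerProductSpace ℝ H]

lemma real_inner_sub_le_zero_of_forall_norm_sub_le {K : Set H} (hK : Convex ℝ K) {u v : H}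
    (hv : v ∈ K) (hmin : ∀ z ∈ K, ‖u - v‖ ≤ ‖u - z‖) : ∀ w ∈ K, ⟪u - v, w - v⟫ ≤ 0 := by
  have : Nonempty K := ⟨⟨v, hv⟩⟩
  rw [← norm_eq_iInf_iff_real_inner_le_zero hK hv]
  refine le_antisymm (le_ciInf fun w => hmin w w.2) ?_
  have hbdd : BddBelow (Set.range fun w : K => ‖u - w‖) :=
    ⟨0, Set.forall_mem_range.2 fun _ => norm_nonneg _⟩
  exact ciInf_le hbdd ⟨v, hv⟩

lemma norm_sub_sq_le_of_forall_norm_sub_le {K : Set H} (hK : Convex ℝ K) {u v z : H}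
    (hv : v ∈ K) (hmin : ∀ z ∈ K, ‖u - v‖ ≤ ‖u - z‖) (hz : z ∈ K) :
    ‖v - z‖ ^ 2 ≤ ‖u - z‖ ^ 2 - ‖u - v‖ ^ 2 := by
  have hinner := real_inner_sub_le_zero_of_forall_norm_sub_le hK hv hmin z hz
  have hexp : ‖u - z‖ ^ 2 = ‖u - v‖ ^ 2 - 2 * ⟪u - v, z - v⟫ + ‖z - v‖ ^ 2 := by
    rw [← norm_sub_sq_real, sub_sub_sub_cancel_right]
  rw [norm_sub_rev v z]
  linarith

lemma convex_setOf_inner_sub_nonpos (a b : H) : Convex ℝ {w : H | ⟪a, w - b⟫ ≤ 0} := by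
  simp only [inner_sub_right, sub_nonpos]
  exact convex_halfSpace_le (innerₛₗ ℝ a).isLinear _

lemma norm_sub_smul_sq_sub_norm_sub_smul_sq (x p q g : H) (c : ℝ) :
    ‖x - c • g - p‖ ^ 2 - ‖x - c • g - q‖ ^ 2
      = ‖x - p‖ ^ 2 - ‖x - q‖ ^ 2 - 2 * c * ⟪q - p, g⟫ := by
  have hp : ‖x - c • g - p‖ ^ 2 = ‖x - p‖ ^ 2 - 2 * (c * ⟪x - p, g⟫) + ‖c • g‖ ^ 2 := by
    rw [← real_inner_smul_right, ← norm_sub_sq_real, sub_right_comm]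
  have hq : ‖x - c • g - q‖ ^ 2 = ‖x - q‖ ^ 2 - 2 * (c * ⟪x - q, g⟫) + ‖c • g‖ ^ 2 := by
    rw [← real_inner_smul_right, ← norm_sub_sq_real, sub_right_comm]
  have hpq : q - p = (x - p) - (x - q) := by abel
  rw [hp, hq, hpq, inner_sub_left (x - p)]
  ring

lemma real_inner_sub_apply_nonneg_of_monotone {F : H → H}
    (hmono : ∀ x y : H, ⟪F x - F y, x - y⟫ ≥ 0) {C : Set H} {xs : H}
    (hVI : ∀ x ∈ C, ⟪F xs, x - xs⟫ ≥ 0) {y : H} (hy : y ∈ C) : 0 ≤ ⟪y - xs, F y⟫ := by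
  have hsplit : ⟪y - xs, F y⟫ = ⟪F y - F xs, y - xs⟫ + ⟪F xs, y - xs⟫ := by
    rw [← inner_add_left, sub_add_cancel, real_inner_comm]
  linarith [hmono y xs, hVI y hy]

theorem norm_proj_sub_sq_le {T : Set H} (hT : Convex ℝ T)
    {x y xs x₁ g a d : H} {α ρ γ : ℝ} (hα : 0 ≤ α) (hγρ : 0 ≤ γ * ρ)
    (hxsT : xs ∈ T) (hx₁T : x₁ ∈ T)
    (hx₁ : ∀ z ∈ T, ‖x - (γ * ρ * α) • g - x₁‖ ≤ ‖x - (γ * ρ * α) • g - z‖)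
    (hg : 0 ≤ ⟪y - xs, g⟫) (hd : d = a + α • g) (hcut : ⟪a, x₁ - y⟫ ≤ 0)
    (hρ : ρ * ‖d‖ ^ 2 = ⟪x - y, d⟫) :
    ‖x₁ - xs‖ ^ 2 ≤ ‖x - xs‖ ^ 2 - γ * (2 - γ) * (ρ ^ 2 * ‖d‖ ^ 2) := by
  have hproj := norm_sub_sq_le_of_forall_norm_sub_le hT hx₁T hx₁ hxsT
  rw [norm_sub_smul_sq_sub_norm_sub_smul_sq] at hproj
  have hdg : ⟪x₁ - y, d⟫ ≤ α * ⟪x₁ - xs, g⟫ := by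
    have hsplit : x₁ - xs = (x₁ - y) + (y - xs) := by abel
    rw [hd, inner_add_right, real_inner_smul_right, real_inner_comm a, hsplit, inner_add_left]
    nlinarith
  have hd' : ⟪x₁ - y, d⟫ = ρ * ‖d‖ ^ 2 - ⟪x - x₁, d⟫ := by
    rw [hρ, ← inner_sub_left]
    congr 1
    abel
  have hyoung : 2 * (γ * ρ) * ⟪x - x₁, d⟫ ≤ ‖x - x₁‖ ^ 2 + (γ * ρ) ^ 2 * ‖d‖ ^ 2 := by
    have := sq_nonneg ‖(x - x₁) - (γ * ρ) • d‖
    rw [norm_sub_sq_real, real_inner_smul_right, norm_smul, mul_pow, Real.norm_eq_abs,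
      sq_abs] at this
    linarith
  have htdg : γ * ρ * ⟪x₁ - y, d⟫ ≤ γ * ρ * α * ⟪x₁ - xs, g⟫ := by
    rw [mul_assoc (γ * ρ)]
    exact mul_le_mul_of_nonneg_left hdg hγρ
  rw [hd'] at htdg
  linarith

theorem norm_proj_halfSpace_sub_sq_le {x y xs x₁ g a d : H} {α ρ γ : ℝ}
    (hα : 0 ≤ α) (hγ : 0 ≤ γ) (hd : d = a + α • g) (hpos : 0 < ⟪x - y, d⟫)
    (hρ : ρ = ⟪x - y, d⟫ / ‖d‖ ^ 2) (hxs : ⟪a, xs - y⟫ ≤ 0) (hg : 0 ≤ ⟪y - xs, g⟫)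
    (hx₁T : x₁ ∈ {w : H | ⟪a, w - y⟫ ≤ 0})
    (hx₁ : ∀ z ∈ {w : H | ⟪a, w - y⟫ ≤ 0},
      ‖x - (γ * ρ * α) • g - x₁‖ ≤ ‖x - (γ * ρ * α) • g - z‖) :
    ‖x₁ - xs‖ ^ 2 ≤ ‖x - xs‖ ^ 2 - γ * (2 - γ) * (⟪x - y, d⟫ ^ 2 / ‖d‖ ^ 2) := by
  have hd0 : d ≠ 0 := by
    rintro rfl
    simp at hpos
  have hρd : ρ * ‖d‖ ^ 2 = ⟪x - y, d⟫ := by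
    rw [hρ, div_mul_cancel₀]
    positivity
  have hρsq : ρ ^ 2 * ‖d‖ ^ 2 = ⟪x - y, d⟫ ^ 2 / ‖d‖ ^ 2 := by
    rw [hρ]
    field_simp
  have hρ0 : 0 ≤ ρ := hρ ▸ div_nonneg hpos.le (sq_nonneg _)
  rw [← hρsq]
  exact norm_proj_sub_sq_le
    (convex_setOf_inner_sub_nonpos a y) hα (mul_nonneg hγ hρ0) hxs hx₁T hx₁ hg hd hx₁T hρd

section StepsizeBounds

variable {v w : H} {μ : ℝ}

lemma mul_norm_sq_le_inner_sub (hw : ‖w‖ ≤ μ * ‖v‖) : (1 - μ) * ‖v‖ ^ 2 ≤ ⟪v, v - w⟫ := by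
  have := real_inner_le_norm v w
  rw [inner_sub_right, real_inner_self_eq_norm_sq]
  nlinarith [mul_le_mul_of_nonneg_left hw (norm_nonneg v)]

lemma real_inner_sub_pos (hμ : μ < 1) (hv : v ≠ 0) (hw : ‖w‖ ≤ μ * ‖v‖) :
    0 < ⟪v, v - w⟫ := by
  have := norm_pos_iff.2 hv
  exact lt_of_lt_of_le (mul_pos (by linarith) (by positivity)) (mul_norm_sq_le_inner_sub hw)

lemma norm_sub_sq_le_mul_norm_sq (hvw : 0 ≤ ⟪v, w⟫) (hw : ‖w‖ ≤ μ * ‖v‖) :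
    ‖v - w‖ ^ 2 ≤ (1 + μ ^ 2) * ‖v‖ ^ 2 := by
  have := pow_le_pow_left₀ (norm_nonneg w) hw 2
  rw [norm_sub_sq_real]
  nlinarith

lemma mul_norm_sq_le_sq_inner_sub_div (hμ : μ ≤ 1) (hvw : 0 ≤ ⟪v, w⟫) (hw : ‖w‖ ≤ μ * ‖v‖) :
    (1 - μ) ^ 2 / (1 + μ ^ 2) * ‖v‖ ^ 2 ≤ ⟪v, v - w⟫ ^ 2 / ‖v - w‖ ^ 2 := by
  have hlow := mul_norm_sq_le_inner_sub hw
  have hup := norm_sub_sq_le_mul_norm_sq hvw hw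
  rcases (norm_nonneg (v - w)).eq_or_lt with hd | hd
  · have hvw : v - w = 0 := norm_eq_zero.1 hd.symm
    rw [hvw, inner_zero_right] at hlow
    rw [hvw, norm_zero, zero_pow two_ne_zero, div_zero, div_mul_eq_mul_div]
    refine div_nonpos_of_nonpos_of_nonneg ?_ (by positivity)
    nlinarith [sub_nonneg.2 hμ]
  rw [div_mul_eq_mul_div, div_le_div_iff₀ (by positivity) (by positivity)]
  have hlow2 := pow_le_pow_left₀ (mul_nonneg (sub_nonneg.2 hμ) (sq_nonneg ‖v‖)) hlow 2
  calc (1 - μ) ^ 2 * ‖v‖ ^ 2 * ‖v - w‖ ^ 2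
      ≤ (1 - μ) ^ 2 * ‖v‖ ^ 2 * ((1 + μ ^ 2) * ‖v‖ ^ 2) := by gcongr
    _ = ((1 - μ) * ‖v‖ ^ 2) ^ 2 * (1 + μ ^ 2) := by ring
    _ ≤ ⟪v, v - w⟫ ^ 2 * (1 + μ ^ 2) := by gcongr

end StepsizeBounds

end

theorem fejer_monotonicity_general
    {H : Type*} [NormedAddCommGroup H] [InnerProductSpace ℝ H]
    (C : Set H) (hconv : Convex ℝ C)
    (F : H → H) (hmono : ∀ x y : H, ⟪F x - F y, x - y⟫ ≥ 0)
    (xstar : H) (hxstarC : xstar ∈ C)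
    (hVI : ∀ x ∈ C, ⟪F xstar, x - xstar⟫ ≥ 0)
    (xk : H) (αk μ : ℝ) (hα : 0 < αk) (hμ0 : 0 < μ) (hμ1 : μ < 1)
    (yk : H) (hykC : yk ∈ C) (hxy : xk ≠ yk)
    (hykproj : ∀ z ∈ C, ‖(xk - αk • F xk) - yk‖ ≤ ‖(xk - αk • F xk) - z‖)
    (hstep : αk * ‖F xk - F yk‖ ≤ μ * ‖xk - yk‖)
    (Tk : Set H) (hTk : Tk = {w : H | ⟪(xk - αk • F xk) - yk, w - yk⟫ ≤ 0})
    (dk : H) (hdk : dk = (xk - yk) - αk • (F xk - F yk))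
    (ρk : ℝ) (hρ : ρk = ⟪xk - yk, dk⟫ / ‖dk‖ ^ 2)
    (γ : ℝ) (hγ0 : 0 < γ) (hγ2 : γ < 2)
    (xk1 : H) (hxk1T : xk1 ∈ Tk)
    (hxk1proj : ∀ z ∈ Tk, ‖(xk - (γ * ρk * αk) • F yk) - xk1‖ ≤ ‖(xk - (γ * ρk * αk) • F yk) - z‖) :
    ‖xk1 - xstar‖ ^ 2 ≤ ‖xk - xstar‖ ^ 2
      - (γ * (2 - γ) * (1 - μ) ^ 3 / (1 + μ ^ 2)) * ‖xk - yk‖ ^ 2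
    ∧ ‖xk1 - xstar‖ ≤ ‖xk - xstar‖ := by
  have hvw : 0 ≤ ⟪xk - yk, αk • (F xk - F yk)⟫ := by
    rw [real_inner_smul_right, real_inner_comm]
    exact mul_nonneg hα.le (hmono xk yk)
  have hw : ‖αk • (F xk - F yk)‖ ≤ μ * ‖xk - yk‖ := by
    rwa [norm_smul, Real.norm_of_nonneg hα.le]
  have hpos : 0 < ⟪xk - yk, dk⟫ := hdk ▸ real_inner_sub_pos hμ1 (sub_ne_zero.2 hxy) hw
  subst hTk
  have hcontr := norm_proj_halfSpace_sub_sq_le hα.le hγ0.le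
    (by rw [hdk, smul_sub]; abel) hpos hρ
    (real_inner_sub_le_zero_of_forall_norm_sub_le hconv hykC hykproj xstar hxstarC)
    (real_inner_sub_apply_nonneg_of_monotone hmono hVI hykC) hxk1T hxk1proj
  have hratio : (1 - μ) ^ 3 / (1 + μ ^ 2) * ‖xk - yk‖ ^ 2 ≤ ⟪xk - yk, dk⟫ ^ 2 / ‖dk‖ ^ 2 := by
    have hcube : (1 - μ) ^ 3 ≤ (1 - μ) ^ 2 :=
      pow_le_pow_of_le_one (by linarith) (by linarith) (by norm_num)
    rw [hdk]
    refine le_trans ?_ (mul_norm_sq_le_sq_inner_sub_div hμ1.le hvw hw)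
    gcongr
  have hγγ : 0 ≤ γ * (2 - γ) := mul_nonneg hγ0.le (by linarith)
  have hfirst : ‖xk1 - xstar‖ ^ 2 ≤ ‖xk - xstar‖ ^ 2
      - (γ * (2 - γ) * (1 - μ) ^ 3 / (1 + μ ^ 2)) * ‖xk - yk‖ ^ 2 := by
    calc ‖xk1 - xstar‖ ^ 2 ≤ _ := hcontr
      _ ≤ ‖xk - xstar‖ ^ 2 - γ * (2 - γ) * ((1 - μ) ^ 3 / (1 + μ ^ 2) * ‖xk - yk‖ ^ 2) := by
        gcongr
      _ = _ := by ring
  refine ⟨hfirst, (pow_le_pow_iff_left₀ (norm_nonneg _) (norm_nonneg _) two_ne_zero).1 ?_⟩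
  have : 0 ≤ 1 - μ := by linarith
  have : 0 ≤ (γ * (2 - γ) * (1 - μ) ^ 3 / (1 + μ ^ 2)) * ‖xk - yk‖ ^ 2 := by positivity
  linarith

theorem fejer_monotonicity
    {H : Type*} [NormedAddCommGroup H] [InnerProductSpace ℝ H] [CompleteSpace H]
    (C : Set H) (hne : C.Nonempty) (hclosed : IsClosed C) (hconv : Convex ℝ C)
    (F : H → H) (hmono : ∀ x y : H, ⟪F x - F y, x - y⟫ ≥ 0)
    (xstar : H) (hxstarC : xstar ∈ C)
    (hVI : ∀ x ∈ C, ⟪F xstar, x - xstar⟫ ≥ 0)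
    (xk : H) (αk μ : ℝ) (hα : 0 < αk) (hμ0 : 0 < μ) (hμ1 : μ < 1)
    (yk : H) (hykC : yk ∈ C) (hxy : xk ≠ yk)
    (hykproj : ∀ z ∈ C, ‖(xk - αk • F xk) - yk‖ ≤ ‖(xk - αk • F xk) - z‖)
    (hstep : αk * ‖F xk - F yk‖ ≤ μ * ‖xk - yk‖)
    (Tk : Set H) (hTk : Tk = {w : H | ⟪(xk - αk • F xk) - yk, w - yk⟫ ≤ 0})
    (dk : H) (hdk : dk = (xk - yk) - αk • (F xk - F yk))
    (ρk : ℝ) (hρ : ρk = ⟪xk - yk, dk⟫ / ‖dk‖ ^ 2)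
    (γ : ℝ) (hγ0 : 0 < γ) (hγ2 : γ < 2)
    (xk1 : H) (hxk1T : xk1 ∈ Tk)
    (hxk1proj : ∀ z ∈ Tk, ‖(xk - (γ * ρk * αk) • F yk) - xk1‖ ≤ ‖(xk - (γ * ρk * αk) • F yk) - z‖) :
    ‖xk1 - xstar‖ ^ 2 ≤ ‖xk - xstar‖ ^ 2
      - (γ * (2 - γ) * (1 - μ) ^ 3 / (1 + μ ^ 2)) * ‖xk - yk‖ ^ 2
    ∧ ‖xk1 - xstar‖ ≤ ‖xk - xstar‖ :=
  fejer_monotonicity_general C hconv F hmono xstar hxstarC hVI xk αk μ hα hμ0 hμ1 yk hykC hxy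
    hykproj hstep Tk hTk dk hdk ρk hρ γ hγ0 hγ2 xk1 hxk1T hxk1proj
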